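/- arXiv:1008.1081 — 2 statements merged into one kernel-verified Lean document; each statement's English description precedes it below -/
import Mathlib

section
/- (Theorem 5.1, converse direction.) Let V ⊂ Z and W ⊂ Z' be closed subspaces and let T : D(T) ⊂ V → W be a closed linear operator with D(T) dense in V. Define Ã as the restriction of A_max to the domain D(Ã) := {u ∈ D(A_max) : u_ζ ∈ D(T) and pr_W(A_max u) = T u_ζ}. Then Ã is a closed operator with A_min ⊂ Ã ⊂ A_max, the closure of {u_ζ : u ∈ D(Ã)} equals V, and the closure of {v_{ζ'} : v ∈ D(Ã*)} equals W; thus Ã corresponds to T : V → W. -/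
noncomputable section

open Filter Topology

namespace GrubbExt

variable {H : Type*} [NormedAddCommGroup H] [InnerProductSpace ℂ H] [CompleteSpace H]

/-- The inclusion of a closed subspace composed with the orthogonal projection onto it,
as a continuous linear map `H →L[ℂ] H`.  This is `i_K ∘ pr_K` in the notation of the paper. -/
def projCl (K : Submodule ℂ H) (hK : IsClosed (K : Set H)) : H →L[ℂ] H :=
  haveI : CompleteSpace K := hK.completeSpace_coe
  K.subtypeL.comp (K.orthogonalProjectionOnto)

/-- `R` is the (everywhere defined, bounded) inverse of `P - lam`. -/
structure IsResolvent (P : H →ₗ.[ℂ] H) (lam : ℂ) (R : H →L[ℂ] H) : Prop where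
  mem : ∀ f : H, R f ∈ P.domain
  left : ∀ u : P.domain, R (P u - lam • (u : H)) = u
  right : ∀ f : H, P ⟨R f, mem f⟩ - lam • R f = f

/-- `E^λ := I + λ(A_γ - λ)^{-1}`, given the resolvent `R = (A_γ - λ)^{-1}`. -/
def Eop (lam : ℂ) (R : H →L[ℂ] H) : H →L[ℂ] H := ContinuousLinearMap.id ℂ H + lam • R

/-- `E'^{λ̄} := I + λ̄(A_γ^* - λ̄)^{-1}`, given the resolvent `R' = (A_γ^* - λ̄)^{-1}`. -/
def Eop' (lam : ℂ) (R' : H →L[ℂ] H) : H →L[ℂ] H :=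
  ContinuousLinearMap.id ℂ H + (starRingEnd ℂ lam) • R'

/-- The resolvent set of a partially defined operator. -/
def resSet (P : H →ₗ.[ℂ] H) : Set ℂ := {lam | ∃ R : H →L[ℂ] H, IsResolvent P lam R}

/-- The set of "Rayleigh quotients" `Re⟨Pu,u⟩` over unit vectors `u` in the domain of `P`;
the lower bound `m(P)` is the infimum of this set. -/
def raySet (P : H →ₗ.[ℂ] H) : Set ℝ :=
  {r | ∃ u : P.domain, ‖(u : H)‖ = 1 ∧ r = (inner ℂ (P u) (u : H) : ℂ).re}

/-- The abstract set-up of Grubb's extension theory: a dual pair `A_min, A'_min` of closed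
densely defined operators in a Hilbert space `H`, together with a reference operator `A_γ`
lying between `A_min` and `A_max := (A'_min)*`, which is bijective with bounded inverse
(and whose adjoint is likewise bijective with bounded inverse). -/
structure Setup (H : Type*) [NormedAddCommGroup H] [InnerProductSpace ℂ H]
    [CompleteSpace H] where
  Amin : H →ₗ.[ℂ] H
  Amin' : H →ₗ.[ℂ] H
  closed_Amin : IsClosed (Amin.graph : Set (H × H))
  closed_Amin' : IsClosed (Amin'.graph : Set (H × H))
  dense_Amin : Dense (Amin.domain : Set H)
  dense_Amin' : Dense (Amin'.domain : Set H)
  Amin_le_max : Amin ≤ Amin'.adjoint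
  Amin'_le_max' : Amin' ≤ Amin.adjoint
  Agam : H →ₗ.[ℂ] H
  Amin_le_Agam : Amin ≤ Agam
  Agam_le_max : Agam ≤ Amin'.adjoint
  Agaminv : H →L[ℂ] H
  Agaminv_mem : ∀ f : H, Agaminv f ∈ Agam.domain
  Agaminv_left : ∀ u : Agam.domain, Agaminv (Agam u) = u
  Agaminv_right : ∀ f : H, Agam ⟨Agaminv f, Agaminv_mem f⟩ = f
  Agamstarinv : H →L[ℂ] H
  Agamstarinv_mem : ∀ f : H, Agamstarinv f ∈ Agam.adjoint.domain
  Agamstarinv_left : ∀ v : Agam.adjoint.domain, Agamstarinv (Agam.adjoint v) = v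
  Agamstarinv_right : ∀ f : H, Agam.adjoint ⟨Agamstarinv f, Agamstarinv_mem f⟩ = f

namespace Setup

variable (S : Setup H)

/-- `A_max := (A'_min)*`. -/
def Amax : H →ₗ.[ℂ] H := S.Amin'.adjoint

/-- `A'_max := (A_min)*`. -/
def Amax' : H →ₗ.[ℂ] H := S.Amin.adjoint

/-- `u_ζ := u - A_γ^{-1} A_max u`, the nullspace component of `u ∈ D(A_max)`. -/
def uzeta (u : S.Amax.domain) : H := (u : H) - S.Agaminv (S.Amax u)

/-- `v_{ζ'} := v - (A_γ^*)^{-1} A'_max v`, the nullspace component of `v ∈ D(A'_max)`. -/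
def vzeta (v : S.Amax'.domain) : H := (v : H) - S.Agamstarinv (S.Amax' v)

/-- `Z := ker A_max`, as a submodule of `H`. -/
def Zker : Submodule ℂ H := (LinearMap.ker S.Amax.toFun).map S.Amax.domain.subtype

/-- `Z' := ker A'_max`, as a submodule of `H`. -/
def Zker' : Submodule ℂ H := (LinearMap.ker S.Amax'.toFun).map S.Amax'.domain.subtype

lemma coe_Zker :
    (S.Zker : Set H) = ⋂ v : S.Amin'.domain, {y : H | (inner ℂ y (S.Amin' v) : ℂ) = 0} := by
  ext y
  simp only [Set.mem_iInter, Set.mem_setOf_eq, SetLike.mem_coe, Zker, Submodule.mem_map,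
    LinearMap.mem_ker]
  constructor
  · rintro ⟨u, hu, rfl⟩ v
    have h := (LinearPMap.adjoint_isFormalAdjoint S.dense_Amin') u v
    have hu' : S.Amin'.adjoint u = 0 := hu
    rw [hu'] at h
    simpa using h.symm
  · intro h
    have hmem : y ∈ S.Amax.domain := by
      refine LinearPMap.mem_adjoint_domain_of_exists _ ⟨0, fun x => ?_⟩
      simp [h x]
    refine ⟨⟨y, hmem⟩, ?_, rfl⟩
    exact LinearPMap.adjoint_apply_eq S.dense_Amin' ⟨y, hmem⟩ fun x => by simp [h x]

lemma isClosed_Zker : IsClosed (S.Zker : Set H) := by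
  rw [S.coe_Zker]
  exact isClosed_iInter fun v =>
    isClosed_eq (Continuous.inner continuous_id continuous_const) continuous_const

lemma coe_Zker' :
    (S.Zker' : Set H) = ⋂ v : S.Amin.domain, {y : H | (inner ℂ y (S.Amin v) : ℂ) = 0} := by
  ext y
  simp only [Set.mem_iInter, Set.mem_setOf_eq, SetLike.mem_coe, Zker', Submodule.mem_map,
    LinearMap.mem_ker]
  constructor
  · rintro ⟨u, hu, rfl⟩ v
    have h := (LinearPMap.adjoint_isFormalAdjoint S.dense_Amin) u v
    have hu' : S.Amin.adjoint u = 0 := hu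
    rw [hu'] at h
    simpa using h.symm
  · intro h
    have hmem : y ∈ S.Amax'.domain := by
      refine LinearPMap.mem_adjoint_domain_of_exists _ ⟨0, fun x => ?_⟩
      simp [h x]
    refine ⟨⟨y, hmem⟩, ?_, rfl⟩
    exact LinearPMap.adjoint_apply_eq S.dense_Amin ⟨y, hmem⟩ fun x => by simp [h x]

lemma isClosed_Zker' : IsClosed (S.Zker' : Set H) := by
  rw [S.coe_Zker']
  exact isClosed_iInter fun v =>
    isClosed_eq (Continuous.inner continuous_id continuous_const) continuous_const

/-- The orthogonal projection onto `Z = ker A_max`. -/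
def projZ : H →L[ℂ] H := projCl S.Zker S.isClosed_Zker

/-- The orthogonal projection onto `Z' = ker A'_max`. -/
def projZ' : H →L[ℂ] H := projCl S.Zker' S.isClosed_Zker'

variable (At : H →ₗ.[ℂ] H)

/-- `D(T) = {u_ζ : u ∈ D(Ã)}`, the set of nullspace components of elements of `D(Ã)`. -/
def dzeta : Set H := {x | ∃ u : S.Amax.domain, (u : H) ∈ At.domain ∧ x = S.uzeta u}

/-- `{v_{ζ'} : v ∈ D(Ã*)}`. -/
def dzeta' : Set H := {x | ∃ v : S.Amax'.domain, (v : H) ∈ At.adjoint.domain ∧ x = S.vzeta v}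

/-- `V := closure {u_ζ : u ∈ D(Ã)}`. -/
def Vsub : Submodule ℂ H := (Submodule.span ℂ (S.dzeta At)).topologicalClosure

/-- `W := closure {v_{ζ'} : v ∈ D(Ã*)}`. -/
def Wsub : Submodule ℂ H := (Submodule.span ℂ (S.dzeta' At)).topologicalClosure

lemma isClosed_Vsub : IsClosed ((S.Vsub At : Set H)) :=
  Submodule.isClosed_topologicalClosure _

lemma isClosed_Wsub : IsClosed ((S.Wsub At : Set H)) :=
  Submodule.isClosed_topologicalClosure _

/-- The orthogonal projection onto `V`. -/
def projV : H →L[ℂ] H := projCl (S.Vsub At) (S.isClosed_Vsub At)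

/-- The orthogonal projection onto `W`. -/
def projW : H →L[ℂ] H := projCl (S.Wsub At) (S.isClosed_Wsub At)

/-- The set `{(u_ζ, pr_W (A_max u)) : u ∈ D(Ã)}`, for a general closed subspace `W`. -/
def TgraphOn (W : Submodule ℂ H) (hW : IsClosed (W : Set H)) : Set (H × H) :=
  {p | ∃ u : S.Amax.domain, (u : H) ∈ At.domain ∧ p.1 = S.uzeta u ∧
    p.2 = projCl W hW (S.Amax u)}

/-- The graph of the operator `T : V → W` corresponding to `Ã`. -/
def Tgraph : Set (H × H) := S.TgraphOn At (S.Wsub At) (S.isClosed_Wsub At)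


/-- `F^λ := I - λ A_γ^{-1}`. -/
def Fop (lam : ℂ) : H →L[ℂ] H := ContinuousLinearMap.id ℂ H - lam • S.Agaminv

/-- `F'^{λ̄} := I - λ̄ (A_γ^*)^{-1}`. -/
def Fop' (lam : ℂ) : H →L[ℂ] H := ContinuousLinearMap.id ℂ H - (starRingEnd ℂ lam) • S.Agamstarinv

/-- `Z_λ := ker(A_max - λ)`, as a subset of `H`. -/
def ZkerL (lam : ℂ) : Set H :=
  {x | ∃ hx : x ∈ S.Amax.domain, S.Amax ⟨x, hx⟩ = lam • x}

/-- `Z'_{λ̄} := ker(A'_max - λ̄)`, as a subset of `H`. -/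
def ZkerL' (lam : ℂ) : Set H :=
  {x | ∃ hx : x ∈ S.Amax'.domain, S.Amax' ⟨x, hx⟩ = (starRingEnd ℂ lam) • x}

/-- `pr^λ_ζ u := u - (A_γ - λ)^{-1}(A_max - λ)u`, given the resolvent `R = (A_γ - λ)^{-1}`. -/
def uzetaL (lam : ℂ) (R : H →L[ℂ] H) (u : S.Amax.domain) : H :=
  (u : H) - R (S.Amax u - lam • (u : H))

/-- `pr^{λ̄}_{ζ'} v := v - (A_γ^* - λ̄)^{-1}(A'_max - λ̄)v`,
given the resolvent `R' = (A_γ^* - λ̄)^{-1}`. -/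
def vzetaL (lam : ℂ) (R' : H →L[ℂ] H) (v : S.Amax'.domain) : H :=
  (v : H) - R' (S.Amax' v - (starRingEnd ℂ lam) • (v : H))

/-- `D(T^λ) = {pr^λ_ζ u : u ∈ D(Ã)}`. -/
def dzetaL (lam : ℂ) (R : H →L[ℂ] H) : Set H :=
  {x | ∃ u : S.Amax.domain, (u : H) ∈ At.domain ∧ x = S.uzetaL lam R u}

/-- `{pr^{λ̄}_{ζ'} v : v ∈ D(Ã*)}`. -/
def dzetaL' (lam : ℂ) (R' : H →L[ℂ] H) : Set H :=
  {x | ∃ v : S.Amax'.domain, (v : H) ∈ At.adjoint.domain ∧ x = S.vzetaL lam R' v}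

/-- `V_λ := closure {pr^λ_ζ u : u ∈ D(Ã)}`. -/
def VLsub (lam : ℂ) (R : H →L[ℂ] H) : Submodule ℂ H :=
  (Submodule.span ℂ (S.dzetaL At lam R)).topologicalClosure

/-- `W_{λ̄} := closure {pr^{λ̄}_{ζ'} v : v ∈ D(Ã*)}`. -/
def WLsub (lam : ℂ) (R' : H →L[ℂ] H) : Submodule ℂ H :=
  (Submodule.span ℂ (S.dzetaL' At lam R')).topologicalClosure

lemma isClosed_WLsub (lam : ℂ) (R' : H →L[ℂ] H) : IsClosed ((S.WLsub At lam R' : Set H)) :=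
  Submodule.isClosed_topologicalClosure _

/-- The orthogonal projection onto `W_{λ̄}`. -/
def projWL (lam : ℂ) (R' : H →L[ℂ] H) : H →L[ℂ] H :=
  projCl (S.WLsub At lam R') (S.isClosed_WLsub At lam R')

/-- The graph of the operator `T^λ : V_λ → W_{λ̄}` corresponding to `Ã - λ`:
`{(pr^λ_ζ u, pr_{W_{λ̄}}((A_max - λ)u)) : u ∈ D(Ã)}`. -/
def TgraphL (lam : ℂ) (R R' : H →L[ℂ] H) : Set (H × H) :=
  {p | ∃ u : S.Amax.domain, (u : H) ∈ At.domain ∧ p.1 = S.uzetaL lam R u ∧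
    p.2 = S.projWL At lam R' (S.Amax u - lam • (u : H))}

/-- `G^λ_{V,W} x := -pr_W (λ E^λ x)`, where `W = W(Ã)`. -/
def Gval (lam : ℂ) (R : H →L[ℂ] H) (x : H) : H :=
  -(S.projW At (lam • Eop lam R x))

/-- `G^μ_{Z,Z} z := -pr_Z (μ E^μ z)`. -/
def GZval (lam : ℂ) (R : H →L[ℂ] H) (x : H) : H :=
  -(S.projZ (lam • Eop lam R x))

lemma mem_Amax_res {lam : ℂ} {Rt : H →L[ℂ] H} (h2 : At ≤ S.Amax)
    (hRt : IsResolvent At lam Rt) (w : H) :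
    S.Agaminv w - Rt (w - lam • S.Agaminv w) ∈ S.Amax.domain :=
  Submodule.sub_mem _ (S.Agam_le_max.1 (S.Agaminv_mem w)) (h2.1 (hRt.mem _))

/-- `M(λ) w := pr_ζ ((I - (Ã - λ)^{-1}(A_max - λ)) A_γ^{-1} w)`, the value of the abstract
`M`-function on `w`. -/
def Mval {lam : ℂ} {Rt : H →L[ℂ] H} (h2 : At ≤ S.Amax) (hRt : IsResolvent At lam Rt)
    (w : H) : H :=
  S.uzeta ⟨S.Agaminv w - Rt (w - lam • S.Agaminv w), S.mem_Amax_res At h2 hRt w⟩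

end Setup

/-!
`Ã` is `A_max` restricted to the preimage of the graph of `T` under the bounded map
`u ↦ (u_ζ, pr_W (A_max u))`, hence closed. Since `D(A_max) = D(A_γ) ∔ Z`, every pair `(z, T z)`
is attained by `u = A_γ⁻¹ (T z) + z`, which gives `D(T) = {u_ζ}` and the graph of `T`.
For `W`, Green's formula shows both that `v_ζ' ∈ W` for `v ∈ D(Ã*)`, and that `w ∈ W` is some
`v_ζ'` as soon as `⟨T z, w⟩ = ⟨z, g⟩` for all `z ∈ D(T)`. If `w ∈ W` is orthogonal to all
`v_ζ'`, project `(0, w)` onto the closed graph of `T` to get `y` with `w - T y` of that form;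
orthogonality then forces `‖w - T y‖² + ‖y‖² = 0`, so `w = 0`.
-/

open scoped InnerProductSpace

theorem _root_.LinearPMap.adjoint_le_adjoint {𝕜 E F : Type*} [RCLike 𝕜]
    [NormedAddCommGroup E] [InnerProductSpace 𝕜 E] [CompleteSpace E]
    [NormedAddCommGroup F] [InnerProductSpace 𝕜 F] {A B : E →ₗ.[𝕜] F}
    (hA : Dense (A.domain : Set E)) (h : A ≤ B) : B.adjoint ≤ A.adjoint := by
  have hB : Dense (B.domain : Set E) := hA.mono h.1
  refine LinearPMap.IsFormalAdjoint.le_adjoint hA fun x y => ?_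
  obtain ⟨x', hx', hAx⟩ := LinearPMap.exists_of_le h x
  rw [hAx, (LinearPMap.adjoint_isFormalAdjoint hB).symm x' y, hx']

/-- Orthogonal decomposition of `(0, w)` along the closed graph of `T`. -/
theorem _root_.LinearPMap.IsClosed.exists_inner_apply_sub_eq {𝕜 E F : Type*} [RCLike 𝕜]
    [NormedAddCommGroup E] [InnerProductSpace 𝕜 E] [CompleteSpace E]
    [NormedAddCommGroup F] [InnerProductSpace 𝕜 F] [CompleteSpace F] {T : E →ₗ.[𝕜] F}
    (hT : T.IsClosed) (w : F) :
    ∃ y : T.domain, ∀ z : T.domain, ⟪T z, w - T y⟫_𝕜 = ⟪(z : E), y⟫_𝕜 := by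
  let e := WithLp.prodContinuousLinearEquiv 2 𝕜 E F
  let G : Submodule 𝕜 (WithLp 2 (E × F)) := T.graph.comap e.toLinearEquiv.toLinearMap
  have : CompleteSpace G := (hT.preimage e.continuous).completeSpace_coe
  let x₀ : WithLp 2 (E × F) := WithLp.toLp 2 (0, w)
  obtain ⟨y, hy1, hy2⟩ := T.mem_graph_iff.mp (G.starProjection_apply_mem x₀)
  have hq : G.starProjection x₀ = WithLp.toLp 2 ((y : E), T y) :=
    (WithLp.ext_iff (p := 2)).mpr (Prod.ext hy1.symm hy2.symm)
  refine ⟨y, fun z => ?_⟩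
  have h0 := (Submodule.mem_orthogonal G _).mp (G.sub_starProjection_mem_orthogonal x₀)
    (WithLp.toLp 2 ((z : E), T z)) (T.mem_graph z)
  rw [hq, ← WithLp.toLp_sub, WithLp.prod_inner_apply] at h0
  simp only [Prod.fst_sub, Prod.snd_sub, zero_sub, inner_neg_right] at h0
  linear_combination h0

theorem _root_.Submodule.topologicalClosure_eq_of_inf_orthogonal_eq_bot {𝕜 E : Type*}
    [RCLike 𝕜] [NormedAddCommGroup E] [InnerProductSpace 𝕜 E] [CompleteSpace E]
    {K W : Submodule 𝕜 E} (hKW : K ≤ W) (hW : IsClosed (W : Set E)) (h : W ⊓ Kᗮ = ⊥) :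
    K.topologicalClosure = W := by
  refine le_antisymm (K.topologicalClosure_minimal hKW hW) fun w hw => ?_
  let L := K.topologicalClosure
  have : CompleteSpace L := K.isClosed_topologicalClosure.completeSpace_coe
  have hperp : w - L.starProjection w ∈ W ⊓ Kᗮ :=
    ⟨W.sub_mem hw (K.topologicalClosure_minimal hKW hW (L.starProjection_apply_mem w)),
      Submodule.orthogonal_le K.le_topologicalClosure (L.sub_starProjection_mem_orthogonal w)⟩
  rw [h, Submodule.mem_bot, sub_eq_zero] at hperp
  exact hperp ▸ L.starProjection_apply_mem w

theorem _root_.LinearPMap.mem_graph_domRestrict_iff {R E F : Type*} [Ring R]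
    [AddCommGroup E] [Module R E] [AddCommGroup F] [Module R F] {f : E →ₗ.[R] F}
    {S : Submodule R E} {p : E × F} : p ∈ (f.domRestrict S).graph ↔ p ∈ f.graph ∧ p.1 ∈ S := by
  obtain ⟨a, b⟩ := p
  simp only [LinearPMap.mem_graph_iff]
  constructor
  · rintro ⟨x, rfl, rfl⟩
    exact ⟨⟨⟨x, x.2.2⟩, rfl, (LinearPMap.domRestrict_apply rfl).symm⟩, x.2.1⟩
  · rintro ⟨⟨x, rfl, rfl⟩, hx⟩
    exact ⟨⟨x, hx, x.2⟩, rfl, LinearPMap.domRestrict_apply rfl⟩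

section Projection

variable (K : Submodule ℂ H) (hK : IsClosed (K : Set H))

lemma projCl_eq_self {x : H} (hx : x ∈ K) : projCl K hK x = x := by
  have := hK.completeSpace_coe
  exact K.starProjection_eq_self_iff.mpr hx

lemma projCl_eq_zero {x : H} (hx : x ∈ Kᗮ) : projCl K hK x = 0 := by
  have := hK.completeSpace_coe
  simp [projCl, K.orthogonalProjectionOnto_eq_zero_iff.mpr hx]

lemma inner_projCl_left (x : H) {w : H} (hw : w ∈ K) : ⟪projCl K hK x, w⟫_ℂ = ⟪x, w⟫_ℂ := by
  have := hK.completeSpace_coe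
  have hKw : K.starProjection w = w := K.starProjection_eq_self_iff.mpr hw
  exact (K.inner_starProjection_left_eq_right x w).trans (by rw [hKw])

end Projection

namespace Setup

variable (S : Setup H)

lemma Agam_adjoint_le_Amax' : S.Agam.adjoint ≤ S.Amax' :=
  LinearPMap.adjoint_le_adjoint S.dense_Amin S.Amin_le_Agam

lemma inner_Agamstarinv_right (f g : H) :
    ⟪f, S.Agamstarinv g⟫_ℂ = ⟪S.Agaminv f, g⟫_ℂ := by
  have hdense : Dense (S.Agam.domain : Set H) := S.dense_Amin.mono S.Amin_le_Agam.1
  have h := (LinearPMap.adjoint_isFormalAdjoint hdense).symm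
    ⟨S.Agaminv f, S.Agaminv_mem f⟩ ⟨S.Agamstarinv g, S.Agamstarinv_mem g⟩
  rwa [S.Agaminv_right f, S.Agamstarinv_right g] at h

lemma green (u : S.Amax.domain) (v : S.Amax'.domain) :
    ⟪S.Amax u, (v : H)⟫_ℂ - ⟪(u : H), S.Amax' v⟫_ℂ
      = ⟪S.Amax u, S.vzeta v⟫_ℂ - ⟪S.uzeta u, S.Amax' v⟫_ℂ := by
  simp only [uzeta, vzeta, inner_sub_left, inner_sub_right, S.inner_Agamstarinv_right]
  ring

lemma inner_Amax_vzeta {At : H →ₗ.[ℂ] H} (hmin : S.Amin ≤ At) (hmax : At ≤ S.Amax)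
    {u : S.Amax.domain} (hu : (u : H) ∈ At.domain)
    {v : S.Amax'.domain} (hv : (v : H) ∈ At.adjoint.domain) :
    ⟪S.Amax u, S.vzeta v⟫_ℂ = ⟪S.uzeta u, S.Amax' v⟫_ℂ := by
  have hAt : At ⟨u, hu⟩ = S.Amax u := hmax.2 rfl
  have hAt' : At.adjoint ⟨v, hv⟩ = S.Amax' v :=
    (LinearPMap.adjoint_le_adjoint S.dense_Amin hmin).2 rfl
  have h := LinearPMap.adjoint_isFormalAdjoint (S.dense_Amin.mono hmin.1) ⟨v, hv⟩ ⟨u, hu⟩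
  rw [hAt, hAt'] at h
  have hadj : ⟪S.Amax u, (v : H)⟫_ℂ = ⟪(u : H), S.Amax' v⟫_ℂ := by
    rw [← inner_conj_symm, ← h, inner_conj_symm]
  have hgreen := S.green u v
  rw [hadj, sub_self] at hgreen
  exact sub_eq_zero.mp hgreen.symm

lemma exists_Amax_eq_uzeta_eq {z : H} (hz : z ∈ S.Zker) (f : H) :
    ∃ u : S.Amax.domain, S.Amax u = f ∧ S.uzeta u = z := by
  obtain ⟨⟨z, hz⟩, hAz : S.Amax ⟨z, hz⟩ = 0, rfl⟩ := hz
  let u₀ : S.Amax.domain := ⟨S.Agaminv f, S.Agam_le_max.1 (S.Agaminv_mem f)⟩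
  have hAu₀ : S.Amax u₀ = f := (S.Agam_le_max.2 rfl).symm.trans (S.Agaminv_right f)
  have hAu : S.Amax (u₀ + ⟨z, hz⟩) = f := by rw [S.Amax.map_add, hAu₀, hAz, add_zero]
  refine ⟨u₀ + ⟨z, hz⟩, hAu, ?_⟩
  simp only [uzeta, hAu, Submodule.coe_add, u₀, add_sub_cancel_left, Submodule.subtype_apply]

lemma exists_Amax'_eq_vzeta_eq {z : H} (hz : z ∈ S.Zker') (g : H) :
    ∃ v : S.Amax'.domain, S.Amax' v = g ∧ S.vzeta v = z := by
  obtain ⟨⟨z, hz⟩, hAz : S.Amax' ⟨z, hz⟩ = 0, rfl⟩ := hz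
  let v₀ : S.Amax'.domain := ⟨S.Agamstarinv g, S.Agam_adjoint_le_Amax'.1 (S.Agamstarinv_mem g)⟩
  have hAv₀ : S.Amax' v₀ = g :=
    (S.Agam_adjoint_le_Amax'.2 rfl).symm.trans (S.Agamstarinv_right g)
  have hAv : S.Amax' (v₀ + ⟨z, hz⟩) = g := by rw [S.Amax'.map_add, hAv₀, hAz, add_zero]
  refine ⟨v₀ + ⟨z, hz⟩, hAv, ?_⟩
  simp only [vzeta, hAv, Submodule.coe_add, v₀, add_sub_cancel_left, Submodule.subtype_apply]

lemma uzeta_eq_zero_of_mem_Amin_domain {u : S.Amax.domain} (hu : (u : H) ∈ S.Amin.domain) :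
    S.uzeta u = 0 := by
  have hu' : (u : H) ∈ S.Agam.domain := S.Amin_le_Agam.1 hu
  have h : S.Amax u = S.Agam ⟨u, hu'⟩ := (S.Agam_le_max.2 rfl).symm
  rw [uzeta, h, S.Agaminv_left, sub_self]

lemma Amax_mem_orthogonal_Zker' {u : S.Amax.domain} (hu : (u : H) ∈ S.Amin.domain) :
    S.Amax u ∈ S.Zker'ᗮ := by
  refine (Submodule.mem_orthogonal _ _).mpr fun w hw => ?_
  obtain ⟨w, hAw : S.Amin.adjoint w = 0, rfl⟩ := hw
  have h := LinearPMap.adjoint_isFormalAdjoint S.dense_Amin w ⟨u, hu⟩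
  have hAu : S.Amin ⟨u, hu⟩ = S.Amax u := S.Amin_le_max.2 rfl
  rw [hAw, inner_zero_left, hAu] at h
  exact h.symm

section Extension

variable (W : Submodule ℂ H) (hW : IsClosed (W : Set H)) (T : H →ₗ.[ℂ] H)

def zetaPair : S.Amax.domain →ₗ[ℂ] H × H :=
  (S.Amax.domain.subtype - S.Agaminv.toLinearMap ∘ₗ S.Amax.toFun).prod
    ((projCl W hW).toLinearMap ∘ₗ S.Amax.toFun)

lemma zetaPair_apply (u : S.Amax.domain) :
    S.zetaPair W hW u = (S.uzeta u, projCl W hW (S.Amax u)) := rfl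

def extensionDomain : Submodule ℂ H :=
  (T.graph.comap (S.zetaPair W hW)).map S.Amax.domain.subtype

/-- The operator `Ã` of the paper. -/
def extension : H →ₗ.[ℂ] H := S.Amax.domRestrict (S.extensionDomain W hW T)

variable {W hW T}

lemma mem_extensionDomain {u : S.Amax.domain} :
    (u : H) ∈ S.extensionDomain W hW T ↔ S.zetaPair W hW u ∈ T.graph :=
  ⟨fun ⟨v, hv, hvu⟩ => (Subtype.ext hvu : v = u) ▸ hv, fun h => ⟨u, h, rfl⟩⟩

lemma mem_extension_domain {u : S.Amax.domain} :
    (u : H) ∈ (S.extension W hW T).domain ↔ S.zetaPair W hW u ∈ T.graph := by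
  rw [extension, LinearPMap.domRestrict_domain, Submodule.mem_inf, S.mem_extensionDomain]
  exact and_iff_left u.2

lemma mem_extension_domain_iff_exists (x : H) :
    x ∈ (S.extension W hW T).domain ↔ ∃ hx : x ∈ S.Amax.domain,
      (S.uzeta ⟨x, hx⟩, projCl W hW (S.Amax ⟨x, hx⟩)) ∈ T.graph :=
  ⟨fun hx => ⟨LinearPMap.domRestrict_le.1 hx, S.mem_extension_domain (u := ⟨x, _⟩) |>.mp hx⟩,
    fun ⟨hx, hxT⟩ => S.mem_extension_domain (u := ⟨x, hx⟩) |>.mpr hxT⟩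

lemma extension_le_Amax : S.extension W hW T ≤ S.Amax := LinearPMap.domRestrict_le

lemma Amin_le_extension (hWZ : W ≤ S.Zker') : S.Amin ≤ S.extension W hW T := by
  refine ⟨fun x hx => ?_, fun x y hxy => ?_⟩
  · let u : S.Amax.domain := ⟨x, S.Amin_le_max.1 hx⟩
    have hpr : projCl W hW (S.Amax u) = 0 :=
      projCl_eq_zero W hW (Submodule.orthogonal_le hWZ (S.Amax_mem_orthogonal_Zker' hx))
    refine S.mem_extension_domain (u := u) |>.mpr ?_
    rw [zetaPair_apply, S.uzeta_eq_zero_of_mem_Amin_domain hx, hpr]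
    exact T.graph.zero_mem
  · have hyx : (y : H) = ((⟨x, S.Amin_le_max.1 x.2⟩ : S.Amax.domain) : H) := hxy.symm
    exact (S.Amin_le_max.2 rfl).trans (S.extension_le_Amax.2 hyx).symm

lemma isClosed_extension (hT : T.IsClosed) : (S.extension W hW T).IsClosed := by
  let Ψ : H × H → H × H := fun p => (p.1 - S.Agaminv p.2, projCl W hW p.2)
  have hgraph : ((S.extension W hW T).graph : Set (H × H)) =
      (S.Amax.graph : Set (H × H)) ∩ Ψ ⁻¹' T.graph := by
    ext ⟨a, b⟩
    simp only [Set.mem_inter_iff, Set.mem_preimage, SetLike.mem_coe, extension,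
      LinearPMap.mem_graph_domRestrict_iff]
    refine and_congr_right fun hp => ?_
    obtain ⟨u, rfl, rfl⟩ := S.Amax.mem_graph_iff.mp hp
    exact S.mem_extensionDomain
  have hΨ : Continuous Ψ := by fun_prop
  rw [LinearPMap.IsClosed, hgraph]
  exact (LinearPMap.adjoint_isClosed S.dense_Amin').inter (hT.preimage hΨ)

lemma exists_mem_extension_domain (hTZ : T.domain ≤ S.Zker) (hTW : ∀ z : T.domain, T z ∈ W)
    (z : T.domain) :
    ∃ u : S.Amax.domain, (u : H) ∈ (S.extension W hW T).domain ∧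
      S.uzeta u = z ∧ S.Amax u = T z := by
  obtain ⟨u, hAu, huz⟩ := S.exists_Amax_eq_uzeta_eq (hTZ z.2) (T z)
  refine ⟨u, S.mem_extension_domain.mpr ?_, huz, hAu⟩
  rw [zetaPair_apply, huz, hAu, projCl_eq_self W hW (hTW z)]
  exact T.mem_graph z

lemma dzeta_extension (hTZ : T.domain ≤ S.Zker) (hTW : ∀ z : T.domain, T z ∈ W) :
    S.dzeta (S.extension W hW T) = T.domain := by
  ext x
  constructor
  · rintro ⟨u, hu, rfl⟩
    obtain ⟨y, hy, -⟩ := T.mem_graph_iff.mp (S.mem_extension_domain.mp hu)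
    simp only [zetaPair_apply] at hy
    exact hy ▸ y.2
  · intro hx
    obtain ⟨u, hu, huz, -⟩ := S.exists_mem_extension_domain hTZ hTW ⟨x, hx⟩
    exact ⟨u, hu, huz.symm⟩

lemma graph_eq_TgraphOn_extension (hTZ : T.domain ≤ S.Zker) (hTW : ∀ z : T.domain, T z ∈ W) :
    (T.graph : Set (H × H)) = S.TgraphOn (S.extension W hW T) W hW := by
  ext ⟨a, b⟩
  constructor
  · intro hp
    obtain ⟨z, rfl, rfl⟩ := T.mem_graph_iff.mp hp
    obtain ⟨u, hu, huz, hAu⟩ := S.exists_mem_extension_domain hTZ hTW z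
    exact ⟨u, hu, huz.symm, by rw [hAu, projCl_eq_self W hW (hTW z)]⟩
  · rintro ⟨u, hu, rfl, rfl⟩
    exact S.mem_extension_domain.mp hu

lemma dzeta'_extension_subset (hWZ : W ≤ S.Zker') :
    S.dzeta' (S.extension W hW T) ⊆ W := by
  rintro x ⟨v, hv, rfl⟩
  rw [← hW.submodule_topologicalClosure_eq, ← W.orthogonal_orthogonal_eq_closure]
  refine (Submodule.mem_orthogonal _ _).mpr fun f hf => ?_
  obtain ⟨u, hAu, huz⟩ := S.exists_Amax_eq_uzeta_eq S.Zker.zero_mem f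
  have hu : (u : H) ∈ (S.extension W hW T).domain := by
    refine S.mem_extension_domain.mpr ?_
    rw [zetaPair_apply, huz, hAu, projCl_eq_zero W hW hf]
    exact T.graph.zero_mem
  have h := S.inner_Amax_vzeta (S.Amin_le_extension hWZ) S.extension_le_Amax hu hv
  rwa [hAu, huz, inner_zero_left] at h

lemma mem_dzeta'_extension (hWZ : W ≤ S.Zker') {w : H} (hw : w ∈ W) (g : H)
    (hwg : ∀ z : T.domain, ⟪T z, w⟫_ℂ = ⟪(z : H), g⟫_ℂ) :
    w ∈ S.dzeta' (S.extension W hW T) := by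
  obtain ⟨v, hAv, hvz⟩ := S.exists_Amax'_eq_vzeta_eq (hWZ hw) g
  refine ⟨v, LinearPMap.mem_adjoint_domain_of_exists _ ⟨g, fun x => ?_⟩, hvz.symm⟩
  let u : S.Amax.domain := ⟨x, S.extension_le_Amax.1 x.2⟩
  obtain ⟨y, hyu, hyA⟩ := T.mem_graph_iff.mp (S.mem_extension_domain (u := u) |>.mp x.2)
  simp only [zetaPair_apply] at hyu hyA
  have hAw : ⟪S.Amax u, w⟫_ℂ = ⟪S.uzeta u, g⟫_ℂ := by
    rw [← inner_projCl_left W hW _ hw, ← hyu, ← hwg y]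
    exact congrArg (⟪·, w⟫_ℂ) hyA.symm
  have hgreen := S.green u v
  rw [hvz, hAv, hAw, sub_self, sub_eq_zero] at hgreen
  have hx : S.extension W hW T x = S.Amax u := S.extension_le_Amax.2 rfl
  rw [hx, ← inner_conj_symm, ← hgreen, inner_conj_symm]

lemma eq_zero_of_mem_W_of_orthogonal_dzeta' (hWZ : W ≤ S.Zker') (hTW : ∀ z : T.domain, T z ∈ W)
    (hT : T.IsClosed) {w : H} (hw : w ∈ W)
    (horth : ∀ x ∈ S.dzeta' (S.extension W hW T), ⟪x, w⟫_ℂ = 0) : w = 0 := by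
  obtain ⟨y, hy⟩ := hT.exists_inner_apply_sub_eq w
  have hx := horth _ (S.mem_dzeta'_extension hWZ (W.sub_mem hw (hTW y)) y hy)
  have hnorm : ‖w - T y‖ ^ 2 + ‖(y : H)‖ ^ 2 = 0 := by
    calc ‖w - T y‖ ^ 2 + ‖(y : H)‖ ^ 2
        = RCLike.re ⟪w - T y, w - T y⟫_ℂ + RCLike.re ⟪T y, w - T y⟫_ℂ := by
          rw [hy, inner_self_eq_norm_sq, inner_self_eq_norm_sq]
      _ = RCLike.re ⟪w - T y, w⟫_ℂ := by
          rw [inner_re_symm (T y), ← map_add, ← inner_add_right, sub_add_cancel]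
      _ = 0 := by rw [hx, map_zero]
  obtain ⟨hwy, hy0⟩ := (add_eq_zero_iff_of_nonneg (sq_nonneg _) (sq_nonneg _)).mp hnorm
  rw [sq_eq_zero_iff, norm_eq_zero] at hwy hy0
  rw [sub_eq_zero] at hwy
  rw [hwy, (Subtype.ext hy0 : y = 0), T.map_zero]

lemma closure_dzeta'_extension (hWZ : W ≤ S.Zker') (hTW : ∀ z : T.domain, T z ∈ W)
    (hT : T.IsClosed) : closure (S.dzeta' (S.extension W hW T)) = W := by
  let K : Submodule ℂ H :=
    ((S.extension W hW T).adjoint.domain.comap S.Amax'.domain.subtype).map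
      (S.Amax'.domain.subtype - S.Agamstarinv.toLinearMap ∘ₗ S.Amax'.toFun)
  have hK : ∀ x, x ∈ K ↔ x ∈ S.dzeta' (S.extension W hW T) := fun x =>
    ⟨fun ⟨v, hv, hx⟩ => ⟨v, hv, hx.symm⟩, fun ⟨v, hv, hx⟩ => ⟨v, hv, hx.symm⟩⟩
  have hKW : K ≤ W := fun x hx => S.dzeta'_extension_subset hWZ ((hK x).mp hx)
  have hperp : W ⊓ Kᗮ = ⊥ := by
    refine (Submodule.eq_bot_iff _).mpr fun w ⟨hw, hwK⟩ =>
      S.eq_zero_of_mem_W_of_orthogonal_dzeta' (hW := hW) hWZ hTW hT hw fun x hx => ?_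
    exact (Submodule.mem_orthogonal K w).mp hwK x ((hK x).mpr hx)
  rw [← Set.ext hK, ← K.topologicalClosure_coe,
    K.topologicalClosure_eq_of_inf_orthogonal_eq_bot hKW hW hperp]

end Extension

end Setup

theorem statement_4_general (S : Setup H) (V W : Submodule ℂ H)
    (hVZ : V ≤ S.Zker) (hWZ : W ≤ S.Zker')
    (hWcl : IsClosed (W : Set H))
    (T : H →ₗ.[ℂ] H) (hTdom : (T.domain : Set H) ⊆ (V : Set H))
    (hTran : ∀ x : T.domain, T x ∈ W)
    (hTdense : closure (T.domain : Set H) = (V : Set H))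
    (hTclosed : IsClosed (T.graph : Set (H × H))) :
    ∃ At : H →ₗ.[ℂ] H,
      S.Amin ≤ At ∧ At ≤ S.Amax ∧ IsClosed (At.graph : Set (H × H)) ∧
      (∀ x : H, x ∈ At.domain ↔ ∃ hx : x ∈ S.Amax.domain,
          (S.uzeta ⟨x, hx⟩, projCl W hWcl (S.Amax ⟨x, hx⟩)) ∈ T.graph) ∧
      closure (S.dzeta At) = (V : Set H) ∧
      closure (S.dzeta' At) = (W : Set H) ∧
      (T.graph : Set (H × H)) = S.TgraphOn At W hWcl := by
  have hTZ : T.domain ≤ S.Zker := fun x hx => hVZ (hTdom hx)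
  refine ⟨S.extension W hWcl T, S.Amin_le_extension hWZ, S.extension_le_Amax,
    S.isClosed_extension hTclosed, S.mem_extension_domain_iff_exists, ?_,
    S.closure_dzeta'_extension hWZ hTran hTclosed, S.graph_eq_TgraphOn_extension hTZ hTran⟩
  rw [S.dzeta_extension hTZ hTran, hTdense]

theorem statement_4 (S : Setup H) (V W : Submodule ℂ H)
    (hVZ : V ≤ S.Zker) (hWZ : W ≤ S.Zker')
    (hVcl : IsClosed (V : Set H)) (hWcl : IsClosed (W : Set H))
    (T : H →ₗ.[ℂ] H) (hTdom : (T.domain : Set H) ⊆ (V : Set H))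
    (hTran : ∀ x : T.domain, T x ∈ W)
    (hTdense : closure (T.domain : Set H) = (V : Set H))
    (hTclosed : IsClosed (T.graph : Set (H × H))) :
    ∃ At : H →ₗ.[ℂ] H,
      S.Amin ≤ At ∧ At ≤ S.Amax ∧ IsClosed (At.graph : Set (H × H)) ∧
      (∀ x : H, x ∈ At.domain ↔ ∃ hx : x ∈ S.Amax.domain,
          (S.uzeta ⟨x, hx⟩, projCl W hWcl (S.Amax ⟨x, hx⟩)) ∈ T.graph) ∧
      closure (S.dzeta At) = (V : Set H) ∧
      closure (S.dzeta' At) = (W : Set H) ∧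
      (T.graph : Set (H × H)) = S.TgraphOn At W hWcl :=
  statement_4_general S V W hVZ hWZ hWcl T hTdom hTran hTdense hTclosed

end GrubbExt
end
end

section
/- (Theorem 5.1, kernel and range.) Let Ã ∈ M be closed, corresponding to T : V → W. Then ker Ã = ker T, and ran Ã = ran T + (H ⊖ W), where H ⊖ W denotes the orthogonal complement of W in H and the sum is the set of all sums of an element of ran T and an element of H ⊖ W. -/
noncomputable section

open Filter Topology

namespace GrubbExt

variable {H : Type*} [NormedAddCommGroup H] [InnerProductSpace ℂ H] [CompleteSpace H]

/-! The key fact is that `A_γ⁻¹` maps `H ⊖ W` into `D(Ã)`: for `f ⊥ W` and `v ∈ D(Ã*)`,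
`⟪Ã* v, A_γ⁻¹ f⟫ = ⟪(A_γ*)⁻¹ Ã* v, f⟫ = ⟪v, f⟫` because `v - (A_γ*)⁻¹ Ã* v = v_ζ' ∈ W`,
and `Ã = Ã**` as `Ã` is closed. If `(u_ζ, 0)` lies in the graph of `T` then `Ã u ⊥ W`, so
`u_ζ = u - A_γ⁻¹ Ã u ∈ D(Ã)` with `Ã u_ζ = 0`. For `ran T + (H ⊖ W) ⊆ ran Ã`, write
`pr_W Ã u + g = Ã (u + A_γ⁻¹ (g - (Ã u - pr_W Ã u)))` for `g ⊥ W`. -/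

open scoped InnerProductSpace

section ClosedOperator

variable {𝕜 E F : Type*} [RCLike 𝕜] [NormedAddCommGroup E] [InnerProductSpace 𝕜 E]
  [NormedAddCommGroup F] [InnerProductSpace 𝕜 F] [CompleteSpace E] {A : E →ₗ.[𝕜] F}

theorem LinearPMap.adjoint_apply_eq_neg_of_forall_inner_add_eq_zero
    (hA : Dense (A.domain : Set E)) {a : E} {b : F}
    (h : ∀ u : A.domain, ⟪a, (u : E)⟫_𝕜 + ⟪b, A u⟫_𝕜 = 0) :
    ∃ hb : b ∈ A.adjoint.domain, A.adjoint ⟨b, hb⟩ = -a := by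
  have h' : ∀ u : A.domain, ⟪-a, (u : E)⟫_𝕜 = ⟪b, A u⟫_𝕜 := fun u => by
    rw [inner_neg_left, neg_eq_iff_add_eq_zero, h u]
  have hb : b ∈ A.adjoint.domain := LinearPMap.mem_adjoint_domain_of_exists _ ⟨-a, h'⟩
  exact ⟨hb, LinearPMap.adjoint_apply_eq hA ⟨b, hb⟩ h'⟩

/-- `A** ⊆ A` for closed densely defined `A`: its graph is the orthogonal complement of its
orthogonal complement, and the latter is the rotated graph of `A*`. -/
theorem LinearPMap.exists_apply_eq_of_forall_inner_adjoint [CompleteSpace F]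
    (hA : Dense (A.domain : Set E)) (hcl : A.IsClosed) {x : E} {y : F}
    (h : ∀ v : A.adjoint.domain, ⟪A.adjoint v, x⟫_𝕜 = ⟪(v : F), y⟫_𝕜) :
    ∃ hx : x ∈ A.domain, A ⟨x, hx⟩ = y := by
  let G : Submodule 𝕜 (WithLp 2 (E × F)) :=
    A.graph.comap (WithLp.linearEquiv 2 𝕜 (E × F)).toLinearMap
  have : CompleteSpace G :=
    (hcl.preimage (WithLp.prod_continuous_ofLp 2 E F)).completeSpace_coe
  suffices hxy : WithLp.toLp 2 (x, y) ∈ G by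
    obtain ⟨u, rfl, rfl⟩ : ∃ u : A.domain, (u : E) = x ∧ A u = y := A.mem_graph_iff.1 hxy
    exact ⟨u.2, rfl⟩
  rw [← G.orthogonal_orthogonal, Submodule.mem_orthogonal]
  intro q hq
  obtain ⟨hb, hAb⟩ := LinearPMap.adjoint_apply_eq_neg_of_forall_inner_add_eq_zero hA
    (a := q.fst) (b := q.snd) fun u => by
      simpa [WithLp.prod_inner_apply] using
        (Submodule.mem_orthogonal' _ _).1 hq (WithLp.toLp 2 ((u : E), A u))
          (by simp [G])
  have hv := h ⟨q.snd, hb⟩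
  rw [hAb, inner_neg_left, neg_eq_iff_add_eq_zero] at hv
  simpa [WithLp.prod_inner_apply] using hv

end ClosedOperator

theorem projCl_eq_zero_iff (K : Submodule ℂ H) (hK : IsClosed (K : Set H)) (x : H) :
    projCl K hK x = 0 ↔ x ∈ Kᗮ := by
  have : CompleteSpace K := hK.completeSpace_coe
  exact K.starProjection_apply_eq_zero_iff

theorem sub_projCl_mem_orthogonal (K : Submodule ℂ H) (hK : IsClosed (K : Set H)) (x : H) :
    x - projCl K hK x ∈ Kᗮ :=
  have : CompleteSpace K := hK.completeSpace_coe
  K.sub_starProjection_mem_orthogonal x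

namespace Setup

variable (S : Setup H)

theorem inner_Agamstarinv (g f : H) : ⟪S.Agamstarinv g, f⟫_ℂ = ⟪g, S.Agaminv f⟫_ℂ := by
  have hd : Dense (S.Agam.domain : Set H) := S.dense_Amin.mono S.Amin_le_Agam.1
  simpa only [S.Agamstarinv_right, S.Agaminv_right] using
    (LinearPMap.adjoint_isFormalAdjoint hd ⟨_, S.Agamstarinv_mem g⟩ ⟨_, S.Agaminv_mem f⟩).symm

variable {S} {At : H →ₗ.[ℂ] H}

theorem adjoint_le_Amax' (h1 : S.Amin ≤ At) : At.adjoint ≤ S.Amax' := by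
  refine LinearPMap.IsFormalAdjoint.le_adjoint S.dense_Amin (fun u v => ?_)
  rw [h1.2 (y := ⟨u, h1.1 u.2⟩) rfl]
  exact (LinearPMap.adjoint_isFormalAdjoint (S.dense_Amin.mono h1.1)).symm _ v

theorem sub_Agamstarinv_adjoint_mem_Wsub (h1 : S.Amin ≤ At) (v : At.adjoint.domain) :
    (v : H) - S.Agamstarinv (At.adjoint v) ∈ S.Wsub At := by
  have hv := (adjoint_le_Amax' h1).1 v.2
  refine Submodule.le_topologicalClosure _ (Submodule.subset_span ⟨⟨v, hv⟩, v.2, ?_⟩)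
  rw [vzeta, (adjoint_le_Amax' h1).2 (y := ⟨v, hv⟩) rfl]

theorem exists_apply_Agaminv_eq (h1 : S.Amin ≤ At) (hcl : At.IsClosed) {f : H}
    (hf : f ∈ (S.Wsub At)ᗮ) : ∃ hx : S.Agaminv f ∈ At.domain, At ⟨S.Agaminv f, hx⟩ = f := by
  refine LinearPMap.exists_apply_eq_of_forall_inner_adjoint (S.dense_Amin.mono h1.1) hcl
    fun v => ?_
  have hvW : ⟪(v : H) - S.Agamstarinv (At.adjoint v), f⟫_ℂ = 0 :=
    Submodule.inner_right_of_mem_orthogonal (sub_Agamstarinv_adjoint_mem_Wsub h1 v) hf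
  rw [inner_sub_left, sub_eq_zero] at hvW
  rw [hvW, inner_Agamstarinv]

theorem mem_Tgraph_iff (h2 : At ≤ S.Amax) {p : H × H} :
    p ∈ S.Tgraph At ↔
      ∃ u : At.domain, p.1 = (u : H) - S.Agaminv (At u) ∧ p.2 = S.projW At (At u) := by
  constructor
  · rintro ⟨u, hu, hp1, hp2⟩
    refine ⟨⟨u, hu⟩, ?_⟩
    rw [h2.2 (y := u) rfl]
    exact ⟨hp1, hp2⟩
  · rintro ⟨u, hp1, hp2⟩
    rw [h2.2 (y := ⟨u, h2.1 u.2⟩) rfl] at hp1 hp2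
    exact ⟨⟨u, h2.1 u.2⟩, u.2, hp1, hp2⟩

end Setup

theorem statement_6 (S : Setup H) (At : H →ₗ.[ℂ] H)
    (h1 : S.Amin ≤ At) (h2 : At ≤ S.Amax)
    (hcl : IsClosed (At.graph : Set (H × H)))
    (T : H →ₗ.[ℂ] H) (hT : (T.graph : Set (H × H)) = S.Tgraph At) :
    {x : H | ∃ hx : x ∈ At.domain, At ⟨x, hx⟩ = 0} =
      {x : H | (x, (0 : H)) ∈ T.graph} ∧
    {f : H | ∃ u : At.domain, At u = f} =
      {f : H | ∃ y g : H, (∃ x : H, (x, y) ∈ T.graph) ∧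
        g ∈ (S.Wsub At)ᗮ ∧ f = y + g} := by
  have hT' (p : H × H) : p ∈ T.graph ↔
      ∃ u : At.domain, p.1 = (u : H) - S.Agaminv (At u) ∧ p.2 = S.projW At (At u) := by
    rw [← SetLike.mem_coe, hT, Setup.mem_Tgraph_iff h2]
  refine ⟨Set.ext fun x => ⟨?_, ?_⟩, Set.ext fun f => ⟨?_, ?_⟩⟩
  · rintro ⟨hx, hx0⟩
    exact (hT' _).2 ⟨⟨x, hx⟩, by simp [hx0], by simp [hx0]⟩
  · intro hx
    obtain ⟨u, rfl, hu⟩ := (hT' _).1 hx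
    obtain ⟨hmem, hAu⟩ := Setup.exists_apply_Agaminv_eq h1 hcl
      ((projCl_eq_zero_iff _ _ _).1 hu.symm)
    refine ⟨sub_mem u.2 hmem, ?_⟩
    rw [show (⟨_, sub_mem u.2 hmem⟩ : At.domain) = u - ⟨_, hmem⟩ from rfl, At.map_sub, hAu,
      sub_self]
  · rintro ⟨u, rfl⟩
    exact ⟨S.projW At (At u), At u - S.projW At (At u), ⟨_, (hT' _).2 ⟨u, rfl, rfl⟩⟩,
      sub_projCl_mem_orthogonal _ _ _, by abel⟩
  · rintro ⟨y, g, ⟨x, hxy⟩, hg, rfl⟩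
    obtain ⟨u, -, rfl⟩ := (hT' _).1 hxy
    obtain ⟨hmem, hAf⟩ := Setup.exists_apply_Agaminv_eq h1 hcl
      (sub_mem hg (sub_projCl_mem_orthogonal _ _ (At u)))
    exact ⟨u + ⟨_, hmem⟩, by rw [At.map_add, hAf]; abel⟩

end GrubbExt
end
end
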